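/- arXiv:1807.04653 — 5 statements merged into one kernel-verified Lean document; each statement's English description precedes it below -/
import Mathlib

section
/- Let n ≥ 3 and let k ≥ 1 be an integer with 2k + 1 ≤ n − 1. For every κ ∈ Γ with κ_i > 0 for all i, one has Ñ_k(κ) − p_1(κ) · L̃_k(κ) ≤ 0. -/
/-- The `k`-th elementary symmetric polynomial of `x : Fin m → ℝ`. -/
noncomputable def esymm {m : ℕ} (k : ℕ) (x : Fin m → ℝ) : ℝ :=
  ∑ s ∈ Finset.univ.powersetCard k, ∏ i ∈ s, x i

/-- The normalized `k`-th elementary symmetric function `p_k = σ_k / C(m,k)`. -/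
noncomputable def pnorm {m : ℕ} (k : ℕ) (x : Fin m → ℝ) : ℝ :=
  esymm k x / (m.choose k : ℝ)

/-- `L̃_k(λ) = Σ_{i=0}^k (−1)^i C(k,i) p_{2k−2i}(λ)`. -/
noncomputable def Ltilde {m : ℕ} (k : ℕ) (x : Fin m → ℝ) : ℝ :=
  ∑ i ∈ Finset.range (k + 1), (-1 : ℝ) ^ i * (k.choose i : ℝ) * pnorm (2 * k - 2 * i) x

/-- `Ñ_k(λ) = Σ_{i=0}^k (−1)^i C(k,i) p_{2k+1−2i}(λ)`. -/
noncomputable def Ntilde {m : ℕ} (k : ℕ) (x : Fin m → ℝ) : ℝ :=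
  ∑ i ∈ Finset.range (k + 1), (-1 : ℝ) ^ i * (k.choose i : ℝ) * pnorm (2 * k + 1 - 2 * i) x

/-!
Write `P_r(A)` for the mean of the degree-`r` monomials of `x` over a finite set `A` of size `M`,
`Σ'` for the sum over ordered pairs `a ≠ b` in `A`, and `A_ab = A \ {a, b}`. Counting how often
each monomial occurs in these pair sums gives
* `Σ' (x_a x_b - 1) P_s(A_ab) = M (M - 1) (P_{s+2}(A) - P_s(A))`,
* `(s + 1) Σ' (x_a - x_b)² P_s(A_ab) = 2 M² (M - 1) (P_1 P_{s+1} - P_{s+2})(A)`.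
Against the alternating binomial weights the first identity becomes
`M (M - 1) Ñ_{j+1}(A) = Σ' (x_a x_b - 1) Ñ_j(A_ab)`, so for nonnegative `x` with `x_a x_b ≥ 1`
every `Ñ_j` is nonnegative by induction from `Ñ_0 = P_1`; the second becomes
`M² (M - 1) (Ñ_{j+1} - P_1 L̃_{j+1})(A) = -(j + 1) Σ' (x_a - x_b)² Ñ_j(A_ab) ≤ 0`.
-/

open Finset

section Binomial

variable {R : Type*} [CommRing R]

lemma cast_choose_succ_right_mul (n k : ℕ) :
    (n.choose (k + 1) : R) * (k + 1) = n.choose k * (n - k) := by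
  rcases le_or_gt k n with hk | hk
  · have h := congrArg (Nat.cast : ℕ → R) (Nat.choose_succ_right_eq n k)
    push_cast [Nat.cast_sub hk] at h
    exact h
  · simp [Nat.choose_eq_zero_of_lt hk, Nat.choose_eq_zero_of_lt (hk.trans (Nat.lt_succ_self k))]

lemma cast_succ_mul_choose (n k : ℕ) :
    ((n + 1).choose (k + 1) : R) * (k + 1) = (n + 1) * n.choose k := by
  have h := congrArg (Nat.cast : ℕ → R) (Nat.add_one_mul_choose_eq n k)
  push_cast at h
  exact h.symm

lemma cast_choose_add_two_add_two_mul (m s : ℕ) :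
    ((m + 2).choose (s + 2) : R) * ((s + 1) * (s + 2)) = (m + 2) * (m + 1) * m.choose s := by
  have h₁ := cast_succ_mul_choose (R := R) (m + 1) (s + 1)
  have h₂ := cast_succ_mul_choose (R := R) m s
  push_cast at h₁ h₂
  linear_combination (s + 1) * h₁ + (m + 2) * h₂

lemma cast_choose_add_two_succ_mul (m s : ℕ) :
    ((m + 2).choose (s + 1) : R) * ((s + 1) * (m + 1 - s)) = (m + 2) * (m + 1) * m.choose s := by
  have h := cast_choose_succ_right_mul (R := R) (m + 2) (s + 1)
  push_cast at h
  linear_combination -(s + 1) * h + cast_choose_add_two_add_two_mul (R := R) m s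

lemma cast_choose_add_two_mul (m s : ℕ) :
    ((m + 2).choose s : R) * ((m + 2 - s) * (m + 1 - s)) = (m + 2) * (m + 1) * m.choose s := by
  have h := cast_choose_succ_right_mul (R := R) (m + 2) s
  push_cast at h
  linear_combination -(m + 1 - s) * h + cast_choose_add_two_succ_mul (R := R) m s

lemma sum_range_succ_neg_one_pow_mul_choose (f : ℕ → R) (j : ℕ) :
    ∑ i ∈ range (j + 2), (-1) ^ i * ((j + 1).choose i : R) * f i =
      ∑ i ∈ range (j + 1), (-1) ^ i * (j.choose i : R) * (f i - f (i + 1)) := by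
  have hshift : ∑ i ∈ range (j + 1), (-1) ^ (i + 1) * (j.choose (i + 1) : R) * f (i + 1) =
      ∑ i ∈ range (j + 1), (-1) ^ i * (j.choose i : R) * f i - f 0 := by
    rw [sum_range_succ, sum_range_succ' _ j]
    simp
  rw [sum_range_succ' _ (j + 1)]
  simp only [Nat.choose_succ_succ', Nat.cast_add, mul_add, add_mul, sum_add_distrib, hshift,
    mul_sub, sum_sub_distrib]
  simp only [pow_succ, mul_neg_one, neg_mul, sum_neg_distrib, pow_zero, Nat.choose_zero_right,
    Nat.cast_one, one_mul]
  ring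

lemma choose_succ_mul_two_mul_sub_add_one {j i : ℕ} (hi : i ≤ j) :
    (j + 1).choose i * (2 * j + 1 - 2 * i + 1) = 2 * (j + 1) * j.choose i := by
  rw [show 2 * j + 1 - 2 * i + 1 = 2 * (j + 1 - i) by omega, mul_left_comm,
    ← Nat.choose_mul_succ_eq]
  ring

end Binomial

section Esymm

variable {ι : Type*}

noncomputable def esymmOn (A : Finset ι) (k : ℕ) (x : ι → ℝ) : ℝ :=
  ∑ s ∈ A.powersetCard k, ∏ i ∈ s, x i

variable (A : Finset ι) (x : ι → ℝ)

@[simp]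
lemma esymmOn_zero : esymmOn A 0 x = 1 := by
  simp [esymmOn]

lemma esymmOn_one : esymmOn A 1 x = ∑ i ∈ A, x i := by
  simp [esymmOn, powersetCard_one]

variable {A} in
lemma esymmOn_eq_zero_of_card_lt {k : ℕ} (hk : #A < k) : esymmOn A k x = 0 := by
  simp [esymmOn, powersetCard_eq_empty.2 hk]

variable {A x} in
lemma esymmOn_nonneg (hx : ∀ i ∈ A, 0 ≤ x i) (k : ℕ) : 0 ≤ esymmOn A k x :=
  sum_nonneg fun _ hs => prod_nonneg fun i hi => hx i ((mem_powersetCard.1 hs).1 hi)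

variable [DecidableEq ι]

lemma esymmOn_insert {a : ι} (ha : a ∉ A) (r : ℕ) :
    esymmOn (insert a A) (r + 1) x = esymmOn A (r + 1) x + x a * esymmOn A r x := by
  simp only [esymmOn, ← esymm_map_val, insert_val_of_notMem ha, Multiset.map_cons,
    Multiset.esymm, Multiset.powersetCard_cons, Multiset.map_add, Multiset.sum_add,
    Multiset.map_map, Function.comp_def, Multiset.prod_cons, Multiset.sum_map_mul_left]

lemma esymmOn_of_mem {a : ι} (ha : a ∈ A) (r : ℕ) :
    esymmOn A (r + 1) x = esymmOn (A.erase a) (r + 1) x + x a * esymmOn (A.erase a) r x := by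
  rw [← esymmOn_insert _ _ (notMem_erase a A), insert_erase ha]

lemma sum_mul_esymmOn_erase (r : ℕ) :
    ∑ a ∈ A, x a * esymmOn (A.erase a) r x = (r + 1) * esymmOn A (r + 1) x := by
  induction A using Finset.induction_on generalizing r with
  | empty => rw [sum_empty, esymmOn_eq_zero_of_card_lt _ (by simp), mul_zero]
  | @insert a C ha ih =>
    have herase : ∀ c ∈ C, (insert a C).erase c = insert a (C.erase c) := fun c hc =>
      erase_insert_of_ne fun h => ha (h ▸ hc)
    rw [sum_insert ha, erase_insert ha, sum_congr rfl fun c hc => by rw [herase c hc]]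
    cases r with
    | zero => simp [esymmOn_one, sum_insert ha]
    | succ r =>
      have hins : ∀ c ∈ C, x c * esymmOn (insert a (C.erase c)) (r + 1) x =
          x c * esymmOn (C.erase c) (r + 1) x + x a * (x c * esymmOn (C.erase c) r x) :=
        fun c _ => by rw [esymmOn_insert _ _ fun h => ha (mem_of_mem_erase h)]; ring
      rw [sum_congr rfl hins, sum_add_distrib, ← mul_sum, ih, ih, esymmOn_insert _ _ ha]
      push_cast
      ring

lemma sum_esymmOn_erase (r : ℕ) :
    ∑ a ∈ A, esymmOn (A.erase a) r x = (#A - r) * esymmOn A r x := by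
  cases r with
  | zero => simp
  | succ r =>
    have h : ∀ a ∈ A, esymmOn (A.erase a) (r + 1) x =
        esymmOn A (r + 1) x - x a * esymmOn (A.erase a) r x := fun a ha => by
      rw [esymmOn_of_mem _ _ ha]; ring
    rw [sum_congr rfl h, sum_sub_distrib, sum_const, sum_mul_esymmOn_erase, nsmul_eq_mul]
    push_cast
    ring

lemma sum_sq_mul_esymmOn_erase (s : ℕ) :
    ∑ a ∈ A, x a ^ 2 * esymmOn (A.erase a) s x =
      esymmOn A 1 x * esymmOn A (s + 1) x - (s + 2) * esymmOn A (s + 2) x := by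
  have h : ∀ a ∈ A, x a ^ 2 * esymmOn (A.erase a) s x =
      x a * esymmOn A (s + 1) x - x a * esymmOn (A.erase a) (s + 1) x := fun a ha => by
    rw [esymmOn_of_mem _ _ ha]; ring
  rw [sum_congr rfl h, sum_sub_distrib, ← sum_mul, ← esymmOn_one, sum_mul_esymmOn_erase]
  push_cast
  ring

end Esymm

section PairSums

variable {ι : Type*} [DecidableEq ι] (A : Finset ι) (x : ι → ℝ)

lemma sum_pairs_comm (f : ι → ι → ℝ) :
    ∑ a ∈ A, ∑ b ∈ A.erase a, f a b = ∑ a ∈ A, ∑ b ∈ A.erase a, f b a :=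
  sum_comm' fun a b => by simp only [mem_erase]; tauto

lemma sum_pairs_mul_mul_esymmOn (s : ℕ) :
    ∑ a ∈ A, ∑ b ∈ A.erase a, x a * x b * esymmOn ((A.erase a).erase b) s x =
      (s + 1) * (s + 2) * esymmOn A (s + 2) x := by
  have inner : ∀ a ∈ A, ∑ b ∈ A.erase a, x a * x b * esymmOn ((A.erase a).erase b) s x =
      (s + 1) * (x a * esymmOn (A.erase a) (s + 1) x) := fun a _ => by
    simp only [mul_assoc, ← mul_sum, sum_mul_esymmOn_erase]
    ring
  rw [sum_congr rfl inner, ← mul_sum, sum_mul_esymmOn_erase]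
  push_cast
  ring

lemma sum_pairs_esymmOn (s : ℕ) :
    ∑ a ∈ A, ∑ b ∈ A.erase a, esymmOn ((A.erase a).erase b) s x =
      (#A - s - 1) * (#A - s) * esymmOn A s x := by
  have inner : ∀ a ∈ A, ∑ b ∈ A.erase a, esymmOn ((A.erase a).erase b) s x =
      (#A - s - 1) * esymmOn (A.erase a) s x := fun a ha => by
    rw [sum_esymmOn_erase, cast_card_erase_of_mem ha]
    ring
  rw [sum_congr rfl inner, ← mul_sum, sum_esymmOn_erase, mul_assoc]

lemma sum_pairs_sq_mul_esymmOn (s : ℕ) :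
    ∑ a ∈ A, ∑ b ∈ A.erase a, x a ^ 2 * esymmOn ((A.erase a).erase b) s x =
      (#A - s - 1) * (esymmOn A 1 x * esymmOn A (s + 1) x - (s + 2) * esymmOn A (s + 2) x) := by
  have inner : ∀ a ∈ A, ∑ b ∈ A.erase a, x a ^ 2 * esymmOn ((A.erase a).erase b) s x =
      (#A - s - 1) * (x a ^ 2 * esymmOn (A.erase a) s x) := fun a ha => by
    rw [← mul_sum, sum_esymmOn_erase, cast_card_erase_of_mem ha]
    ring
  rw [sum_congr rfl inner, ← mul_sum, sum_sq_mul_esymmOn_erase]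

lemma sum_pairs_sub_sq_mul_esymmOn (s : ℕ) :
    ∑ a ∈ A, ∑ b ∈ A.erase a, (x a - x b) ^ 2 * esymmOn ((A.erase a).erase b) s x =
      2 * ((#A - s - 1) * esymmOn A 1 x * esymmOn A (s + 1) x -
        #A * (s + 2) * esymmOn A (s + 2) x) := by
  have hswap : ∑ a ∈ A, ∑ b ∈ A.erase a, x b ^ 2 * esymmOn ((A.erase a).erase b) s x =
      ∑ a ∈ A, ∑ b ∈ A.erase a, x a ^ 2 * esymmOn ((A.erase a).erase b) s x := by
    rw [sum_pairs_comm]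
    simp only [erase_right_comm]
  have hexp : ∀ a b, (x a - x b) ^ 2 * esymmOn ((A.erase a).erase b) s x =
      x a ^ 2 * esymmOn ((A.erase a).erase b) s x + x b ^ 2 * esymmOn ((A.erase a).erase b) s x
        - 2 * (x a * x b * esymmOn ((A.erase a).erase b) s x) := fun a b => by ring
  simp only [hexp, sum_sub_distrib, sum_add_distrib]
  rw [hswap, sum_pairs_sq_mul_esymmOn]
  simp only [← mul_sum]
  rw [sum_pairs_mul_mul_esymmOn]
  ring

end PairSums

section Normalized

variable {ι : Type*}

noncomputable def pnormOn (A : Finset ι) (k : ℕ) (x : ι → ℝ) : ℝ :=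
  esymmOn A k x / ((#A).choose k : ℝ)

noncomputable def NtildeOn (A : Finset ι) (k : ℕ) (x : ι → ℝ) : ℝ :=
  ∑ i ∈ range (k + 1), (-1 : ℝ) ^ i * (k.choose i : ℝ) * pnormOn A (2 * k + 1 - 2 * i) x

noncomputable def LtildeOn (A : Finset ι) (k : ℕ) (x : ι → ℝ) : ℝ :=
  ∑ i ∈ range (k + 1), (-1 : ℝ) ^ i * (k.choose i : ℝ) * pnormOn A (2 * k - 2 * i) x

variable (A : Finset ι) (x : ι → ℝ)

@[simp]
lemma pnormOn_zero : pnormOn A 0 x = 1 := by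
  simp [pnormOn]

variable [DecidableEq ι]

lemma card_erase_erase {a b : ι} (ha : a ∈ A) (hb : b ∈ A.erase a) :
    #((A.erase a).erase b) = #A - 2 := by
  rw [card_erase_of_mem hb, card_erase_of_mem ha, Nat.sub_sub]

lemma sum_pairs_mul_pnormOn (w : ι → ι → ℝ) (s : ℕ) :
    ∑ a ∈ A, ∑ b ∈ A.erase a, w a b * pnormOn ((A.erase a).erase b) s x =
      (∑ a ∈ A, ∑ b ∈ A.erase a, w a b * esymmOn ((A.erase a).erase b) s x) /
        ((#A - 2).choose s : ℝ) := by
  simp only [sum_div]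
  refine sum_congr rfl fun a ha => sum_congr rfl fun b hb => ?_
  rw [pnormOn, card_erase_erase A ha hb, mul_div_assoc]

lemma sum_pairs_mul_sub_one_mul_pnormOn {s : ℕ} (hs : s + 2 ≤ #A) :
    ∑ a ∈ A, ∑ b ∈ A.erase a, (x a * x b - 1) * pnormOn ((A.erase a).erase b) s x =
      #A * (#A - 1) * (pnormOn A (s + 2) x - pnormOn A s x) := by
  have hE : ∑ a ∈ A, ∑ b ∈ A.erase a, (x a * x b - 1) * esymmOn ((A.erase a).erase b) s x =
      (s + 1) * (s + 2) * esymmOn A (s + 2) x - (#A - s - 1) * (#A - s) * esymmOn A s x := by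
    simp only [sub_mul, one_mul, sum_sub_distrib, sum_pairs_mul_mul_esymmOn, sum_pairs_esymmOn]
  obtain ⟨m, hm⟩ : ∃ m, #A = m + 2 := ⟨#A - 2, by omega⟩
  rw [sum_pairs_mul_pnormOn, hE, pnormOn, pnormOn, hm, Nat.add_sub_cancel]
  have hc : (0 : ℝ) < m.choose s := by exact_mod_cast Nat.choose_pos (by omega)
  have hc₂ : (0 : ℝ) < (m + 2).choose (s + 2) := by exact_mod_cast Nat.choose_pos (by omega)
  have hc₀ : (0 : ℝ) < (m + 2).choose s := by exact_mod_cast Nat.choose_pos (by omega)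
  push_cast
  field_simp
  linear_combination
    (esymmOn A (s + 2) x * ((m + 2).choose s : ℝ)) *
        cast_choose_add_two_add_two_mul (R := ℝ) m s -
      (esymmOn A s x * ((m + 2).choose (s + 2) : ℝ)) * cast_choose_add_two_mul (R := ℝ) m s

lemma succ_mul_sum_pairs_sub_sq_mul_pnormOn {s : ℕ} (hs : s + 2 ≤ #A) :
    (s + 1) *
        ∑ a ∈ A, ∑ b ∈ A.erase a, (x a - x b) ^ 2 * pnormOn ((A.erase a).erase b) s x =
      2 * #A ^ 2 * (#A - 1) * (pnormOn A 1 x * pnormOn A (s + 1) x - pnormOn A (s + 2) x) := by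
  obtain ⟨m, hm⟩ : ∃ m, #A = m + 2 := ⟨#A - 2, by omega⟩
  rw [sum_pairs_mul_pnormOn, sum_pairs_sub_sq_mul_esymmOn, pnormOn, pnormOn, pnormOn, hm,
    Nat.add_sub_cancel, Nat.choose_one_right]
  have hc : (0 : ℝ) < m.choose s := by exact_mod_cast Nat.choose_pos (by omega)
  have hc₂ : (0 : ℝ) < (m + 2).choose (s + 2) := by exact_mod_cast Nat.choose_pos (by omega)
  have hc₁ : (0 : ℝ) < (m + 2).choose (s + 1) := by exact_mod_cast Nat.choose_pos (by omega)
  push_cast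
  field_simp
  linear_combination
    (esymmOn A 1 x * esymmOn A (s + 1) x * ((m + 2).choose (s + 2) : ℝ)) *
        cast_choose_add_two_succ_mul (R := ℝ) m s -
      ((m + 2) * esymmOn A (s + 2) x * ((m + 2).choose (s + 1) : ℝ)) *
        cast_choose_add_two_add_two_mul (R := ℝ) m s

end Normalized

section Recursion

variable {ι : Type*} [DecidableEq ι] (A : Finset ι) (x : ι → ℝ)

lemma sum_pairs_mul_NtildeOn (w : ι → ι → ℝ) (j : ℕ) :
    ∑ a ∈ A, ∑ b ∈ A.erase a, w a b * NtildeOn ((A.erase a).erase b) j x =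
      ∑ i ∈ range (j + 1), (-1) ^ i * (j.choose i : ℝ) *
        ∑ a ∈ A, ∑ b ∈ A.erase a,
          w a b * pnormOn ((A.erase a).erase b) (2 * j + 1 - 2 * i) x := by
  simp only [NtildeOn, mul_sum]
  rw [sum_comm]
  refine sum_congr rfl fun a _ => ?_
  rw [sum_comm]
  exact sum_congr rfl fun b _ => sum_congr rfl fun i _ => by ring

lemma NtildeOn_succ {j : ℕ} (hA : 2 * j + 3 ≤ #A) :
    #A * (#A - 1) * NtildeOn A (j + 1) x =
      ∑ a ∈ A, ∑ b ∈ A.erase a, (x a * x b - 1) * NtildeOn ((A.erase a).erase b) j x := by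
  rw [sum_pairs_mul_NtildeOn, NtildeOn,
    sum_range_succ_neg_one_pow_mul_choose (fun i => pnormOn A (2 * (j + 1) + 1 - 2 * i) x), mul_sum]
  refine sum_congr rfl fun i hi => ?_
  have hi : i < j + 1 := mem_range.1 hi
  rw [sum_pairs_mul_sub_one_mul_pnormOn A x (by omega : 2 * j + 1 - 2 * i + 2 ≤ #A),
    show 2 * (j + 1) + 1 - 2 * i = 2 * j + 1 - 2 * i + 2 by omega,
    show 2 * (j + 1) + 1 - 2 * (i + 1) = 2 * j + 1 - 2 * i by omega]
  ring

variable {A x} in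
lemma NtildeOn_nonneg (j : ℕ) (hA : 2 * j + 1 ≤ #A) (hx : ∀ i ∈ A, 0 ≤ x i)
    (hΓ : (A : Set ι).Pairwise fun a b => 1 ≤ x a * x b) : 0 ≤ NtildeOn A j x := by
  induction j generalizing A with
  | zero =>
    simpa [NtildeOn, pnormOn] using div_nonneg (esymmOn_nonneg hx 1) (Nat.cast_nonneg #A)
  | succ j ih =>
    have hM : (0 : ℝ) < #A * (#A - 1) := by
      have : (2 : ℝ) ≤ #A := by exact_mod_cast (by omega : 2 ≤ #A)
      nlinarith
    refine (mul_nonneg_iff_of_pos_left hM).1 ?_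
    rw [NtildeOn_succ A x (by omega)]
    refine sum_nonneg fun a ha => sum_nonneg fun b hb => mul_nonneg ?_ ?_
    · have := hΓ ha (mem_of_mem_erase hb) (ne_of_mem_erase hb).symm
      linarith
    · have hsub : (A.erase a).erase b ⊆ A := (erase_subset _ _).trans (erase_subset _ _)
      exact ih (by rw [card_erase_erase A ha hb]; omega) (fun i hi => hx i (hsub hi))
        (hΓ.mono (by exact_mod_cast hsub))

end Recursion

section Main

variable {ι : Type*} [DecidableEq ι] (A : Finset ι) (x : ι → ℝ)

lemma NtildeOn_succ_sub_pnormOn_one_mul_LtildeOn {j : ℕ} (hA : 2 * j + 3 ≤ #A) :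
    #A ^ 2 * (#A - 1) * (NtildeOn A (j + 1) x - pnormOn A 1 x * LtildeOn A (j + 1) x) =
      -(j + 1) *
        ∑ a ∈ A, ∑ b ∈ A.erase a, (x a - x b) ^ 2 * NtildeOn ((A.erase a).erase b) j x := by
  have hsplit : NtildeOn A (j + 1) x - pnormOn A 1 x * LtildeOn A (j + 1) x =
      ∑ i ∈ range (j + 1), (-1) ^ i * ((j + 1).choose i : ℝ) *
        (pnormOn A (2 * j + 1 - 2 * i + 2) x -
          pnormOn A 1 x * pnormOn A (2 * j + 1 - 2 * i + 1) x) := by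
    have hlast : ∀ c : ℝ, c * pnormOn A 1 x - pnormOn A 1 x * (c * 1) = 0 := fun c => by ring
    rw [NtildeOn, LtildeOn, mul_sum, ← sum_sub_distrib, sum_range_succ, Nat.add_sub_cancel_left,
      Nat.sub_self, pnormOn_zero, hlast, add_zero]
    refine sum_congr rfl fun i hi => ?_
    have hi : i < j + 1 := mem_range.1 hi
    rw [show 2 * (j + 1) + 1 - 2 * i = 2 * j + 1 - 2 * i + 2 by omega,
      show 2 * (j + 1) - 2 * i = 2 * j + 1 - 2 * i + 1 by omega]
    ring
  rw [hsplit, sum_pairs_mul_NtildeOn, mul_sum, mul_sum]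
  refine sum_congr rfl fun i hi => ?_
  have hi : i < j + 1 := mem_range.1 hi
  set T := ∑ a ∈ A, ∑ b ∈ A.erase a,
    (x a - x b) ^ 2 * pnormOn ((A.erase a).erase b) (2 * j + 1 - 2 * i) x
  have hT := succ_mul_sum_pairs_sub_sq_mul_pnormOn A x (s := 2 * j + 1 - 2 * i) (by omega)
  have hc : ((j + 1).choose i : ℝ) * ((2 * j + 1 - 2 * i : ℕ) + 1) =
      2 * (j + 1) * j.choose i := by
    exact_mod_cast choose_succ_mul_two_mul_sub_add_one (by omega : i ≤ j)
  linear_combination (-1) ^ i / 2 * ((j + 1).choose i : ℝ) * hT - (-1) ^ i / 2 * T * hc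

variable {A x} in
theorem NtildeOn_sub_pnormOn_one_mul_LtildeOn_nonpos {k : ℕ} (hA : 2 * k + 1 ≤ #A)
    (hx : ∀ i ∈ A, 0 ≤ x i) (hΓ : (A : Set ι).Pairwise fun a b => 1 ≤ x a * x b) :
    NtildeOn A k x - pnormOn A 1 x * LtildeOn A k x ≤ 0 := by
  cases k with
  | zero => simp [NtildeOn, LtildeOn]
  | succ j =>
    have hM : (0 : ℝ) < #A ^ 2 * (#A - 1) := by
      have : (2 : ℝ) ≤ #A := by exact_mod_cast (by omega : 2 ≤ #A)
      nlinarith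
    have hsum : 0 ≤ ∑ a ∈ A, ∑ b ∈ A.erase a,
        (x a - x b) ^ 2 * NtildeOn ((A.erase a).erase b) j x := by
      refine sum_nonneg fun a ha => sum_nonneg fun b hb => mul_nonneg (sq_nonneg _) ?_
      have hsub : (A.erase a).erase b ⊆ A := (erase_subset _ _).trans (erase_subset _ _)
      exact NtildeOn_nonneg j (by rw [card_erase_erase A ha hb]; omega) (fun i hi => hx i (hsub hi))
        (hΓ.mono (by exact_mod_cast hsub))
    refine nonpos_of_mul_nonpos_left ?_ hM
    rw [mul_comm, NtildeOn_succ_sub_pnormOn_one_mul_LtildeOn A x (by omega)]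
    exact mul_nonpos_of_nonpos_of_nonneg (neg_nonpos.2 (by positivity)) hsum

end Main

lemma pnorm_eq_pnormOn_univ {m : ℕ} (k : ℕ) (x : Fin m → ℝ) :
    pnorm k x = pnormOn univ k x := by
  simp [pnorm, pnormOn, esymm, esymmOn]

lemma Ntilde_eq_NtildeOn_univ {m : ℕ} (k : ℕ) (x : Fin m → ℝ) :
    Ntilde k x = NtildeOn univ k x := by
  simp only [Ntilde, NtildeOn, pnorm_eq_pnormOn_univ]

lemma Ltilde_eq_LtildeOn_univ {m : ℕ} (k : ℕ) (x : Fin m → ℝ) :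
    Ltilde k x = LtildeOn univ k x := by
  simp only [Ltilde, LtildeOn, pnorm_eq_pnormOn_univ]

theorem Ntilde_sub_p1_mul_Ltilde_nonpos_general (n k : ℕ)
    (hkn : 2 * k + 1 ≤ n - 1) (κ : Fin (n - 1) → ℝ)
    (hΓ : ∀ i j : Fin (n - 1), i ≠ j → 1 ≤ κ i * κ j)
    (hpos : ∀ i, 0 < κ i) :
    Ntilde k κ - pnorm 1 κ * Ltilde k κ ≤ 0 := by
  rw [Ntilde_eq_NtildeOn_univ, Ltilde_eq_LtildeOn_univ, pnorm_eq_pnormOn_univ]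
  exact NtildeOn_sub_pnormOn_one_mul_LtildeOn_nonpos (by simpa using hkn)
    (fun i _ => (hpos i).le) (fun i _ j _ hij => hΓ i j hij)

/-- For `κ` in the cone `Γ = {λ : λ_i λ_j ≥ 1 for i ≠ j}` with positive entries,
`Ñ_k(κ) − p₁(κ) L̃_k(κ) ≤ 0`. -/
theorem Ntilde_sub_p1_mul_Ltilde_nonpos (n k : ℕ) (hn : 3 ≤ n) (hk : 1 ≤ k)
    (hkn : 2 * k + 1 ≤ n - 1) (κ : Fin (n - 1) → ℝ)
    (hΓ : ∀ i j : Fin (n - 1), i ≠ j → 1 ≤ κ i * κ j)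
    (hpos : ∀ i, 0 < κ i) :
    Ntilde k κ - pnorm 1 κ * Ltilde k κ ≤ 0 :=
  Ntilde_sub_p1_mul_Ltilde_nonpos_general n k hkn κ hΓ hpos
end

section
/- Let n ≥ 3 and let κ_1, …, κ_{n−1} be positive real numbers with H = Σ_{k=1}^{n−1} κ_k. Then for any two distinct indices i ≠ j, (κ_i + κ_j)H − Σ_{k=1}^{n−1} κ_k² ≤ ((n−2)/(n−1)) H². -/
/-- For positive `κ_1, …, κ_{n−1}` with sum `H` and any `i ≠ j`,
`(κ_i + κ_j)H − Σ κ_k² ≤ ((n−2)/(n−1)) H²`. -/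
theorem reaction_term_bound (n : ℕ) (hn : 3 ≤ n) (κ : Fin (n - 1) → ℝ)
    (hpos : ∀ i, 0 < κ i) (i j : Fin (n - 1)) (hij : i ≠ j) :
    (κ i + κ j) * (∑ k, κ k) - ∑ k, κ k ^ 2
      ≤ ((n : ℝ) - 2) / ((n : ℝ) - 1) * (∑ k, κ k) ^ 2 := by
  have hm : 2 ≤ n - 1 := by omega
  have hcard : (Finset.univ : Finset (Fin (n - 1))).card = n - 1 := by simp
  have hcast : ((n - 1 : ℕ) : ℝ) = (n : ℝ) - 1 := by
    push_cast [Nat.cast_sub (by omega : 1 ≤ n)]; ring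
  have hH : 0 ≤ ∑ k, κ k := Finset.sum_nonneg fun k _ => (hpos k).le
  have hij' : κ i + κ j ≤ ∑ k, κ k := by
    have := Finset.sum_le_sum_of_subset_of_nonneg
      (Finset.subset_univ ({i, j} : Finset (Fin (n - 1))))
      (fun k _ _ => (hpos k).le)
    rwa [Finset.sum_pair hij] at this
  have hcs : (∑ k, κ k) ^ 2 ≤ ((n : ℝ) - 1) * ∑ k, κ k ^ 2 := by
    have := sq_sum_le_card_mul_sum_sq (s := (Finset.univ : Finset (Fin (n - 1)))) (f := κ)
    rwa [hcard, hcast] at this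
  have hn1 : (0 : ℝ) < (n : ℝ) - 1 := by
    have : (3 : ℝ) ≤ n := by exact_mod_cast hn
    linarith
  rw [div_mul_eq_mul_div, le_div_iff₀ hn1]
  nlinarith [mul_le_mul_of_nonneg_right hij' hH]
end

section
/- Let κ_1, κ_2 be real numbers with 0 < κ_1 ≤ κ_2 and set H = κ_1 + κ_2. If a, b are real numbers satisfying κ_2 a + κ_1 b = 0, then κ_2 (a + b)² + H (a b − b²) ≤ 0. -/
/-- Gradient-term estimate in the case `n − 1 = 2`: if `0 < κ₁ ≤ κ₂`, `H = κ₁ + κ₂` and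
`κ₂ a + κ₁ b = 0`, then `κ₂ (a+b)² + H(ab − b²) ≤ 0`. -/
theorem gradient_estimate_dim_two (κ₁ κ₂ a b : ℝ) (h1 : 0 < κ₁) (h12 : κ₁ ≤ κ₂)
    (hab : κ₂ * a + κ₁ * b = 0) :
    κ₂ * (a + b) ^ 2 + (κ₁ + κ₂) * (a * b - b ^ 2) ≤ 0 := by
  have h2 : 0 < κ₂ := h1.trans_le h12
  have key : κ₂ * (κ₂ * (a + b) ^ 2 + (κ₁ + κ₂) * (a * b - b ^ 2)) = -(4 * κ₁ * κ₂ * b ^ 2) := by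
    linear_combination (κ₂ * a - κ₁ * b + 2 * κ₂ * b + (κ₁ + κ₂) * b) * hab
  nlinarith [sq_nonneg b, mul_pos h1 h2]
end

section
/- Let n ≥ 4 and let κ_1, …, κ_{n−1} be real numbers with 0 < κ_1 ≤ κ_2 ≤ κ_3 ≤ ⋯ ≤ κ_{n−1} and κ_p > κ_1 for all p ≥ 3. Set H = Σ_{p=1}^{n−1} κ_p. If a_1, …, a_{n−1} are real numbers satisfying κ_2 a_1 + κ_1 a_2 = 0, then κ_2 (Σ_{p=1}^{n−1} a_p)² + H (a_1 a_2 − a_2²) ≤ H κ_2 Σ_{p=3}^{n−1} a_p²/(κ_p − κ_1). -/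
/-!
The constraint eliminates `a₁`: `κ₂ (a₁ + a₂) = (κ₂ - κ₁) a₂` and
`κ₂ (a₁ a₂ - a₂²) = -(κ₁ + κ₂) a₂²`. Cauchy–Schwarz with the weights `κ_p - κ₁` (`p ≥ 3`) gives
`(Σ_{p≥3} a_p)² ≤ K T` with `K = Σ_{p≥3} (κ_p - κ₁)` and `T` the sum on the right, and a second,
two-term Cauchy–Schwarz with weights `H - K` and `K` gives
`(Σ a_p)² ≤ H ((a₁ + a₂)² / (H - K) + T)`. Since `H - K ≥ κ₁ + κ₂`, the first term is absorbed by
`H (a₁ a₂ - a₂²)`, because `(κ₂ - κ₁)² ≤ (κ₁ + κ₂)²`.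
-/

open Finset

theorem sq_add_le_mul_add_div_add {b S c K T : ℝ} (hc : 0 < c) (hK : 0 ≤ K) (hT : 0 ≤ T)
    (hST : S ^ 2 ≤ K * T) : (b + S) ^ 2 ≤ (c + K) * (b ^ 2 / c + T) := by
  simpa using sum_sq_le_sum_mul_sum_of_sq_le_mul univ (r := ![b, S]) (f := ![c, K])
    (g := ![b ^ 2 / c, T]) (by simp [Fin.forall_fin_two, hc.le, hK])
    (by simp [Fin.forall_fin_two, hT]; positivity)
    (by simp [Fin.forall_fin_two, hST, mul_div_cancel₀ _ hc.ne'])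

theorem gradient_estimate_of_sq_le_mul {κ₁ κ₂ a₁ a₂ S K T H : ℝ} (hκ₁ : 0 < κ₁) (hκ₁₂ : κ₁ ≤ κ₂)
    (hconstr : κ₂ * a₁ + κ₁ * a₂ = 0) (hK : 0 ≤ K) (hT : 0 ≤ T) (hST : S ^ 2 ≤ K * T)
    (hH : κ₁ + κ₂ + K ≤ H) :
    κ₂ * (a₁ + a₂ + S) ^ 2 + H * (a₁ * a₂ - a₂ ^ 2) ≤ H * κ₂ * T := by
  have hκ₂ : 0 < κ₂ := hκ₁.trans_le hκ₁₂
  have hHK : 0 < H - K := by linarith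
  have hCS : (a₁ + a₂ + S) ^ 2 ≤ H * ((a₁ + a₂) ^ 2 / (H - K) + T) := by
    simpa using sq_add_le_mul_add_div_add (b := a₁ + a₂) hHK hK hT hST
  have hb : κ₂ ^ 2 * (a₁ + a₂) ^ 2 / (H - K) ≤ (κ₁ + κ₂) * a₂ ^ 2 := by
    have : κ₂ * (a₁ + a₂) = (κ₂ - κ₁) * a₂ := by linear_combination hconstr
    rw [← mul_pow, this, div_le_iff₀ hHK, mul_pow]
    have : (κ₂ - κ₁) ^ 2 ≤ (κ₁ + κ₂) * (H - K) := by nlinarith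
    nlinarith [sq_nonneg a₂]
  rw [← mul_le_mul_iff_right₀ hκ₂]
  calc κ₂ * (κ₂ * (a₁ + a₂ + S) ^ 2 + H * (a₁ * a₂ - a₂ ^ 2))
      = κ₂ ^ 2 * (a₁ + a₂ + S) ^ 2 - H * (κ₁ + κ₂) * a₂ ^ 2 := by
        linear_combination H * a₂ * hconstr
    _ ≤ κ₂ ^ 2 * (H * ((a₁ + a₂) ^ 2 / (H - K) + T)) - H * (κ₁ + κ₂) * a₂ ^ 2 := by gcongr
    _ = H * (κ₂ ^ 2 * (a₁ + a₂) ^ 2 / (H - K) - (κ₁ + κ₂) * a₂ ^ 2) + κ₂ * (H * κ₂ * T) := by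
        ring
    _ ≤ κ₂ * (H * κ₂ * T) := by
        have := mul_nonpos_of_nonneg_of_nonpos (by linarith : 0 ≤ H) (sub_nonpos.2 hb)
        linarith

theorem gradient_estimate_of_ne {ι : Type*} [Fintype ι] [DecidableEq ι] (κ a : ι → ℝ) {i j : ι}
    (hij : i ≠ j) (hpos : 0 < κ i) (hle : κ i ≤ κ j) (hgap : ∀ p ∈ ({i, j}ᶜ : Finset ι), κ i < κ p)
    (hconstr : κ j * a i + κ i * a j = 0) :
    κ j * (∑ p, a p) ^ 2 + (∑ p, κ p) * (a i * a j - a j ^ 2)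
      ≤ (∑ p, κ p) * κ j * ∑ p ∈ ({i, j}ᶜ : Finset ι), a p ^ 2 / (κ p - κ i) := by
  set s : Finset ι := {i, j}ᶜ
  have hsplit (f : ι → ℝ) : ∑ p, f p = f i + f j + ∑ p ∈ s, f p := by
    rw [← sum_add_sum_compl {i, j} f, sum_pair hij]
  have hw : ∀ p ∈ s, 0 < κ p - κ i := fun p hp => sub_pos.2 (hgap p hp)
  rw [hsplit a, hsplit κ]
  refine gradient_estimate_of_sq_le_mul hpos hle hconstr (K := ∑ p ∈ s, (κ p - κ i))
    (sum_nonneg fun p hp => (hw p hp).le)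
    (sum_nonneg fun p hp => div_nonneg (sq_nonneg _) (hw p hp).le)
    (sum_sq_le_sum_mul_sum_of_sq_le_mul s (fun p hp => (hw p hp).le)
      (fun p hp => div_nonneg (sq_nonneg _) (hw p hp).le)
      fun p hp => (mul_div_cancel₀ _ (hw p hp).ne').ge) ?_
  have : ∑ p ∈ s, (κ p - κ i) ≤ ∑ p ∈ s, κ p := sum_le_sum fun p _ => sub_le_self _ hpos.le
  linarith

/-- Inequality (9.7): if `0 < κ₁ ≤ κ₂ ≤ ⋯ ≤ κ_{n−1}`, `κ_p > κ₁` for `p ≥ 3`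
(0-indexed: `p ≥ 2`), `H = Σ κ_p`, and `κ₂ a₁ + κ₁ a₂ = 0`, then
`κ₂ (Σ a_p)² + H(a₁a₂ − a₂²) ≤ H κ₂ Σ_{p≥3} a_p²/(κ_p − κ₁)`. -/
theorem gradient_estimate_general (n : ℕ) (hn : 4 ≤ n) (κ a : Fin (n - 1) → ℝ)
    (hpos : 0 < κ ⟨0, by omega⟩) (hmono : Monotone κ)
    (hgap : ∀ p : Fin (n - 1), 2 ≤ (p : ℕ) → κ ⟨0, by omega⟩ < κ p)
    (hconstr : κ ⟨1, by omega⟩ * a ⟨0, by omega⟩ + κ ⟨0, by omega⟩ * a ⟨1, by omega⟩ = 0) :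
    κ ⟨1, by omega⟩ * (∑ p, a p) ^ 2
        + (∑ p, κ p) * (a ⟨0, by omega⟩ * a ⟨1, by omega⟩ - a ⟨1, by omega⟩ ^ 2)
      ≤ (∑ p, κ p) * κ ⟨1, by omega⟩ *
          ∑ p ∈ Finset.univ.filter (fun p : Fin (n - 1) => 2 ≤ (p : ℕ)),
            a p ^ 2 / (κ p - κ ⟨0, by omega⟩) := by
  have htail : Finset.univ.filter (fun p : Fin (n - 1) => 2 ≤ (p : ℕ))
      = ({⟨0, by omega⟩, ⟨1, by omega⟩}ᶜ : Finset (Fin (n - 1))) := by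
    ext p
    simp only [mem_filter, mem_univ, true_and, mem_compl, mem_insert, mem_singleton, Fin.ext_iff]
    omega
  rw [htail]
  exact gradient_estimate_of_ne κ a (by simp [Fin.ext_iff]) hpos (hmono (by simp [Fin.le_def]))
    (fun p hp => hgap p (by rw [← htail] at hp; exact (mem_filter.1 hp).2)) hconstr
end

section
/- Let n ≥ 4 and let κ_1, κ_2, Ĥ be real numbers with 0 < κ_1 < κ_2 and Ĥ > (n−3)κ_1. Set H = κ_1 + κ_2 + Ĥ and ε = (Ĥ(κ_1 + κ_2) + 4κ_1κ_2)/(κ_2 − κ_1)². Then ε > 0 and (1 + ε^{−1})/H ≤ 1/(Ĥ − (n−3)κ_1). -/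
/-- The choice `ε = (Ĥ(κ₁+κ₂) + 4κ₁κ₂)/(κ₂−κ₁)²` satisfies `ε > 0` and
`(1 + ε⁻¹)/H ≤ 1/(Ĥ − (n−3)κ₁)`, where `H = κ₁ + κ₂ + Ĥ`. -/
theorem epsilon_choice (n : ℕ) (hn : 4 ≤ n) (κ₁ κ₂ Hhat : ℝ)
    (h1 : 0 < κ₁) (h12 : κ₁ < κ₂) (hHhat : ((n : ℝ) - 3) * κ₁ < Hhat) :
    0 < (Hhat * (κ₁ + κ₂) + 4 * κ₁ * κ₂) / (κ₂ - κ₁) ^ 2 ∧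
      (1 + ((Hhat * (κ₁ + κ₂) + 4 * κ₁ * κ₂) / (κ₂ - κ₁) ^ 2)⁻¹) / (κ₁ + κ₂ + Hhat)
        ≤ 1 / (Hhat - ((n : ℝ) - 3) * κ₁) := by
  have hn' : (4 : ℝ) ≤ (n : ℝ) := by exact_mod_cast hn
  have hd : 0 < (κ₂ - κ₁) ^ 2 := pow_pos (sub_pos.2 h12) 2
  have hκ1H : κ₁ < Hhat := lt_of_le_of_lt (by nlinarith) hHhat
  have hA : 0 < Hhat * (κ₁ + κ₂) + 4 * κ₁ * κ₂ := by nlinarith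
  have hε : 0 < (Hhat * (κ₁ + κ₂) + 4 * κ₁ * κ₂) / (κ₂ - κ₁) ^ 2 := div_pos hA hd
  refine ⟨hε, ?_⟩
  have hH : 0 < κ₁ + κ₂ + Hhat := by nlinarith
  have hden : 0 < Hhat - ((n : ℝ) - 3) * κ₁ := by linarith
  rw [div_le_div_iff₀ hH hden, inv_div]
  rw [add_mul, one_mul, div_mul_eq_mul_div, ← le_sub_iff_add_le', div_le_iff₀ hA]
  nlinarith [mul_pos h1 hd, mul_nonneg (mul_nonneg h1.le h1.le) (sub_nonneg.2 hn'),
    mul_nonneg (mul_nonneg h1.le (sub_pos.2 h12).le) (sub_nonneg.2 hn'),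
    sq_nonneg (κ₂ - κ₁), mul_pos h1 (h1.trans h12)]
end
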